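/- Let y(x) := (−1)^{4(4−1)/2} x^{−4²/2} det[ I_{j+k+1}(2√x) ]_{j,k=0,…,3} for x > 0. Then y satisfies, for all x > 0, x⁴ y⁽⁵⁾ + 60 x³ y⁽⁴⁾ + (1238 − 20x) x² y⁽³⁾ + (10268 − 662x) x y″ + (28288 − 6108x + 64x²) y′ + (−14144 + 640x) y = 0. -/

import Mathlib

open Real

/-- Modified Bessel function of the first kind,
`I_ν(x) := Σ_{k=0}^∞ (x/2)^{ν+2k}/(k! Γ(ν+k+1))`. -/
noncomputable def besselI (ν : ℝ) (x : ℝ) : ℝ :=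
  ∑' k : ℕ, (x / 2) ^ (ν + 2 * (k : ℝ)) / ((k.factorial : ℝ) * Real.Gamma (ν + (k : ℝ) + 1))

/-- `y(x) := (−1)^{l(l−1)/2} x^{−l²/2} det[I_{j+k+1}(2√x)]_{j,k=0,…,l−1}`. -/
noncomputable def hankelY (l : ℕ) (x : ℝ) : ℝ :=
  (-1 : ℝ) ^ (l * (l - 1) / 2) * x ^ (-((l : ℝ) ^ 2) / 2) *
    Matrix.det (fun j k : Fin l =>
      besselI (((j : ℕ) : ℝ) + ((k : ℕ) : ℝ) + 1) (2 * Real.sqrt x))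



noncomputable def h (ν : ℕ) (x : ℝ) : ℝ :=
  ∑' m : ℕ, x ^ m / ((m.factorial : ℝ) * ((ν + m).factorial : ℝ))

lemma bound_aux (ν m n : ℕ) (hn : n ≤ m) {y R : ℝ} (hR : 1 ≤ R) (hy : |y| ≤ R) :
    ‖(m : ℝ) * y ^ n / ((m.factorial : ℝ) * ((ν + m).factorial : ℝ))‖
      ≤ (2 * R) ^ m / (m.factorial : ℝ) := by
  have h1 : (0:ℝ) < m.factorial := by positivity
  have h2 : (1:ℝ) ≤ ((ν + m).factorial : ℝ) := by
    exact_mod_cast Nat.one_le_iff_ne_zero.2 (Nat.factorial_ne_zero _)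
  have hy0 : (0:ℝ) ≤ |y| := abs_nonneg y
  have hR0 : (0:ℝ) < R := lt_of_lt_of_le one_pos hR
  simp only [norm_div, norm_mul, norm_pow, Real.norm_eq_abs, abs_mul, Nat.abs_cast, abs_abs]
  calc (m : ℝ) * |y| ^ n / ((m.factorial : ℝ) * ((ν + m).factorial : ℝ))
      ≤ (m : ℝ) * |y| ^ n / (m.factorial : ℝ) := by
        gcongr
        exact le_mul_of_one_le_right h1.le h2
    _ ≤ 2 ^ m * R ^ m / (m.factorial : ℝ) := by
        gcongr
        · exact_mod_cast (Nat.lt_two_pow_self (n := m)).le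
        · calc |y| ^ n ≤ R ^ n := by gcongr
            _ ≤ R ^ m := pow_le_pow_right₀ hR hn
    _ = (2 * R) ^ m / (m.factorial : ℝ) := by rw [mul_pow]

lemma hsum (ν : ℕ) (x : ℝ) :
    Summable (fun m : ℕ => x ^ m / ((m.factorial : ℝ) * ((ν + m).factorial : ℝ))) := by
  apply Summable.of_norm_bounded (Real.summable_pow_div_factorial |x|)
  intro m
  have h1 : (0:ℝ) < m.factorial := by positivity
  have h2 : (1:ℝ) ≤ ((ν + m).factorial : ℝ) := by
    exact_mod_cast Nat.one_le_iff_ne_zero.2 (Nat.factorial_ne_zero _)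
  simp only [norm_div, norm_pow, Real.norm_eq_abs, abs_mul, Nat.abs_cast]
  gcongr
  exact le_mul_of_one_le_right h1.le h2

lemma hsum' (ν : ℕ) (x : ℝ) :
    Summable (fun m : ℕ => (m : ℝ) * x ^ m / ((m.factorial : ℝ) * ((ν + m).factorial : ℝ))) := by
  apply Summable.of_norm_bounded (Real.summable_pow_div_factorial (2 * (|x| + 1)))
  intro m
  exact bound_aux ν m m le_rfl (by linarith [abs_nonneg x]) (by linarith [abs_nonneg x])

lemma hsum'' (ν : ℕ) (x : ℝ) :
    Summable (fun m : ℕ => (m : ℝ) * x ^ (m - 1) / ((m.factorial : ℝ) * ((ν + m).factorial : ℝ))) := by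
  apply Summable.of_norm_bounded (Real.summable_pow_div_factorial (2 * (|x| + 1)))
  intro m
  exact bound_aux ν m (m - 1) (Nat.sub_le m 1) (by linarith [abs_nonneg x]) (by linarith [abs_nonneg x])

lemma hasDerivAt_h (ν : ℕ) (x : ℝ) : HasDerivAt (h ν) (h (ν + 1) x) x := by
  have hR1 : (1:ℝ) ≤ |x| + 1 := by linarith [abs_nonneg x]
  have key : HasDerivAt (fun z : ℝ => ∑' m : ℕ,
      z ^ m / ((m.factorial : ℝ) * ((ν + m).factorial : ℝ)))
      (∑' m : ℕ, (m : ℝ) * x ^ (m - 1) / ((m.factorial : ℝ) * ((ν + m).factorial : ℝ))) x := by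
    apply hasDerivAt_tsum_of_isPreconnected
      (u := fun m : ℕ => (2 * (|x| + 1)) ^ m / (m.factorial : ℝ))
      (Real.summable_pow_div_factorial (2 * (|x| + 1)))
      (Metric.isOpen_ball) ((convex_ball (0:ℝ) (|x| + 1)).isPreconnected)
      (fun m y _ => (hasDerivAt_pow m y).div_const _)
      ?_ ?_ (hsum ν x) ?_
    · intro m y hy
      have hy' : |y| ≤ |x| + 1 := by
        have := mem_ball_zero_iff.1 hy
        rw [Real.norm_eq_abs] at this
        linarith
      exact bound_aux ν m (m - 1) (Nat.sub_le m 1) hR1 hy'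
    · exact mem_ball_zero_iff.2 (by rw [Real.norm_eq_abs]; linarith)
    · exact mem_ball_zero_iff.2 (by rw [Real.norm_eq_abs]; linarith)
  have hval : (∑' m : ℕ, (m : ℝ) * x ^ (m - 1) / ((m.factorial : ℝ) * ((ν + m).factorial : ℝ)))
      = h (ν + 1) x := by
    rw [Summable.tsum_eq_zero_add (hsum'' ν x)]
    simp only [Nat.cast_zero, zero_mul, zero_div, zero_add]
    unfold h
    apply tsum_congr
    intro m
    have e1 : ((m + 1 : ℕ) : ℝ) * x ^ (m + 1 - 1) = (m + 1 : ℝ) * x ^ m := by push_cast; ring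
    rw [e1]
    have e2 : ((m + 1).factorial : ℝ) = (m + 1 : ℝ) * (m.factorial : ℝ) := by
      rw [Nat.factorial_succ]; push_cast; ring
    have e3 : (ν + (m + 1)) = (ν + 1 + m) := by omega
    rw [e2, e3]
    have hm1 : (m + 1 : ℝ) ≠ 0 := by positivity
    have hmf : (m.factorial : ℝ) ≠ 0 := by positivity
    have hnf : ((ν + 1 + m).factorial : ℝ) ≠ 0 := by positivity
    field_simp
  rw [← hval]
  exact key

lemma hrec (ν : ℕ) (x : ℝ) :
    h ν x = ((ν : ℝ) + 1) * h (ν + 1) x + x * h (ν + 2) x := by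
  have hs1 : Summable (fun m : ℕ =>
      ((ν : ℝ) + 1) * (x ^ m / ((m.factorial : ℝ) * ((ν + 1 + m).factorial : ℝ)))) :=
    (hsum (ν + 1) x).mul_left _
  have hs2 : Summable (fun m : ℕ =>
      (m : ℝ) * x ^ m / ((m.factorial : ℝ) * ((ν + 1 + m).factorial : ℝ))) := hsum' (ν + 1) x
  have key : h ν x = (∑' m : ℕ,
      (((ν : ℝ) + 1) * (x ^ m / ((m.factorial : ℝ) * ((ν + 1 + m).factorial : ℝ)))
        + (m : ℝ) * x ^ m / ((m.factorial : ℝ) * ((ν + 1 + m).factorial : ℝ)))) := by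
    unfold h
    apply tsum_congr
    intro m
    have e1 : ((ν + 1 + m).factorial : ℝ) = ((ν : ℝ) + 1 + m) * ((ν + m).factorial : ℝ) := by
      have e : (ν + 1 + m) = (ν + m) + 1 := by omega
      rw [e, Nat.factorial_succ]; push_cast; ring
    rw [e1]
    have h1 : (0:ℝ) < m.factorial := by positivity
    have h2 : (0:ℝ) < ((ν + m).factorial : ℝ) := by positivity
    have h3 : (0:ℝ) < (ν : ℝ) + 1 + m := by positivity
    field_simp
  have second : (∑' m : ℕ, (m : ℝ) * x ^ m / ((m.factorial : ℝ) * ((ν + 1 + m).factorial : ℝ)))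
      = x * h (ν + 2) x := by
    rw [Summable.tsum_eq_zero_add hs2]
    simp only [Nat.cast_zero, zero_mul, zero_div, zero_add]
    have e4 : x * h (ν + 2) x
        = ∑' m : ℕ, x * (x ^ m / ((m.factorial : ℝ) * ((ν + 2 + m).factorial : ℝ))) := by
      rw [tsum_mul_left]
      rfl
    rw [e4]
    apply tsum_congr
    intro m
    have e2 : ((m + 1).factorial : ℝ) = (m + 1 : ℝ) * (m.factorial : ℝ) := by
      rw [Nat.factorial_succ]; push_cast; ring
    have e3 : (ν + 1 + (m + 1)) = (ν + 2 + m) := by omega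
    rw [e2, e3]
    have hm1 : (m + 1 : ℝ) ≠ 0 := by positivity
    have hmf : (m.factorial : ℝ) ≠ 0 := by positivity
    have hnf : ((ν + 2 + m).factorial : ℝ) ≠ 0 := by positivity
    push_cast
    field_simp
    ring
  rw [key, Summable.tsum_add hs1 hs2, tsum_mul_left, second]
  rfl

lemma hasDerivAt_congr_deriv {f : ℝ → ℝ} {d d' x : ℝ} (hf : HasDerivAt f d x) (hd : d = d') :
    HasDerivAt f d' x := hd ▸ hf

lemma h3_eq {x : ℝ} (hx : x ≠ 0) : h 3 x = (h 1 x - 2 * h 2 x) / x := by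
  have := hrec 1 x
  norm_num at this
  field_simp
  linarith

lemma hmono (c : ℝ) (a j k e : ℕ) {x : ℝ} (hx : x ≠ 0) :
    HasDerivAt (fun t : ℝ => c * t ^ a * h 1 t ^ j * h 2 t ^ k / t ^ e)
      (c * ((a : ℝ) * x ^ (a - 1)) * h 1 x ^ j * h 2 x ^ k / x ^ e
        + c * x ^ a * ((j : ℝ) * h 1 x ^ (j - 1) * h 2 x) * h 2 x ^ k / x ^ e
        + c * x ^ a * h 1 x ^ j * ((k : ℝ) * h 2 x ^ (k - 1) * ((h 1 x - 2 * h 2 x) / x)) / x ^ e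
        - c * x ^ a * h 1 x ^ j * h 2 x ^ k * ((e : ℝ) * x ^ (e - 1)) / (x ^ e) ^ 2) x := by
  have H1 : HasDerivAt (h 1) (h 2 x) x := hasDerivAt_h 1 x
  have H2 : HasDerivAt (h 2) ((h 1 x - 2 * h 2 x) / x) x := by
    have := hasDerivAt_h 2 x
    rwa [h3_eq hx] at this
  have F : HasDerivAt (fun t : ℝ => c * t ^ a * h 1 t ^ j * h 2 t ^ k)
      (((0 * x ^ a + c * ((a : ℝ) * x ^ (a - 1))) * h 1 x ^ j
          + (c * x ^ a) * ((j : ℝ) * h 1 x ^ (j - 1) * h 2 x)) * h 2 x ^ k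
        + (c * x ^ a * h 1 x ^ j) * ((k : ℝ) * h 2 x ^ (k - 1) * ((h 1 x - 2 * h 2 x) / x))) x :=
    ((((hasDerivAt_const x c).mul (hasDerivAt_pow a x)).mul (H1.pow j)).mul (H2.pow k))
  have G : HasDerivAt (fun t : ℝ => t ^ e) ((e : ℝ) * x ^ (e - 1)) x := hasDerivAt_pow e x
  have D := F.div G (pow_ne_zero e hx)
  apply hasDerivAt_congr_deriv D
  have hxe : (x : ℝ) ^ e ≠ 0 := pow_ne_zero e hx
  field_simp
  ring

noncomputable def Y0 (x : ℝ) : ℝ :=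
      (-576) * x ^ 0 * h 1 x ^ 1 * h 2 x ^ 3 / x ^ 9
      + (864) * x ^ 0 * h 1 x ^ 2 * h 2 x ^ 2 / x ^ 9
      + (-432) * x ^ 0 * h 1 x ^ 3 * h 2 x ^ 1 / x ^ 9
      + (72) * x ^ 0 * h 1 x ^ 4 * h 2 x ^ 0 / x ^ 9
      + (-432) * x ^ 0 * h 1 x ^ 0 * h 2 x ^ 4 / x ^ 8
      + (264) * x ^ 0 * h 1 x ^ 2 * h 2 x ^ 2 / x ^ 8
      + (-48) * x ^ 0 * h 1 x ^ 3 * h 2 x ^ 1 / x ^ 8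
      + (-15) * x ^ 0 * h 1 x ^ 4 * h 2 x ^ 0 / x ^ 8
      + (-240) * x ^ 0 * h 1 x ^ 0 * h 2 x ^ 4 / x ^ 7
      + (60) * x ^ 0 * h 1 x ^ 2 * h 2 x ^ 2 / x ^ 7
      + (8) * x ^ 0 * h 1 x ^ 3 * h 2 x ^ 1 / x ^ 7
      + (-4) * x ^ 0 * h 1 x ^ 4 * h 2 x ^ 0 / x ^ 7
      + (-48) * x ^ 0 * h 1 x ^ 0 * h 2 x ^ 4 / x ^ 6
      + (-8) * x ^ 0 * h 1 x ^ 1 * h 2 x ^ 3 / x ^ 6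
      + (8) * x ^ 0 * h 1 x ^ 2 * h 2 x ^ 2 / x ^ 6
      + (-4) * x ^ 0 * h 1 x ^ 0 * h 2 x ^ 4 / x ^ 5

noncomputable def Y1 (x : ℝ) : ℝ :=
      (8640) * x ^ 0 * h 1 x ^ 1 * h 2 x ^ 3 / x ^ 10
      + (-12960) * x ^ 0 * h 1 x ^ 2 * h 2 x ^ 2 / x ^ 10
      + (6480) * x ^ 0 * h 1 x ^ 3 * h 2 x ^ 1 / x ^ 10
      + (-1080) * x ^ 0 * h 1 x ^ 4 * h 2 x ^ 0 / x ^ 10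
      + (6336) * x ^ 0 * h 1 x ^ 0 * h 2 x ^ 4 / x ^ 9
      + (-4464) * x ^ 0 * h 1 x ^ 2 * h 2 x ^ 2 / x ^ 9
      + (1296) * x ^ 0 * h 1 x ^ 3 * h 2 x ^ 1 / x ^ 9
      + (72) * x ^ 0 * h 1 x ^ 4 * h 2 x ^ 0 / x ^ 9
      + (3600) * x ^ 0 * h 1 x ^ 0 * h 2 x ^ 4 / x ^ 8
      + (-432) * x ^ 0 * h 1 x ^ 1 * h 2 x ^ 3 / x ^ 8
      + (-804) * x ^ 0 * h 1 x ^ 2 * h 2 x ^ 2 / x ^ 8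
      + (-12) * x ^ 0 * h 1 x ^ 3 * h 2 x ^ 1 / x ^ 8
      + (36) * x ^ 0 * h 1 x ^ 4 * h 2 x ^ 0 / x ^ 8
      + (672) * x ^ 0 * h 1 x ^ 0 * h 2 x ^ 4 / x ^ 7
      + (24) * x ^ 0 * h 1 x ^ 1 * h 2 x ^ 3 / x ^ 7
      + (-80) * x ^ 0 * h 1 x ^ 2 * h 2 x ^ 2 / x ^ 7
      + (44) * x ^ 0 * h 1 x ^ 0 * h 2 x ^ 4 / x ^ 6

noncomputable def Y2 (x : ℝ) : ℝ :=
      (-138240) * x ^ 0 * h 1 x ^ 1 * h 2 x ^ 3 / x ^ 11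
      + (207360) * x ^ 0 * h 1 x ^ 2 * h 2 x ^ 2 / x ^ 11
      + (-103680) * x ^ 0 * h 1 x ^ 3 * h 2 x ^ 1 / x ^ 11
      + (17280) * x ^ 0 * h 1 x ^ 4 * h 2 x ^ 0 / x ^ 11
      + (-99072) * x ^ 0 * h 1 x ^ 0 * h 2 x ^ 4 / x ^ 10
      + (-576) * x ^ 0 * h 1 x ^ 1 * h 2 x ^ 3 / x ^ 10
      + (77472) * x ^ 0 * h 1 x ^ 2 * h 2 x ^ 2 / x ^ 10
      + (-27504) * x ^ 0 * h 1 x ^ 3 * h 2 x ^ 1 / x ^ 10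
      + (648) * x ^ 0 * h 1 x ^ 4 * h 2 x ^ 0 / x ^ 10
      + (-57600) * x ^ 0 * h 1 x ^ 0 * h 2 x ^ 4 / x ^ 9
      + (11520) * x ^ 0 * h 1 x ^ 1 * h 2 x ^ 3 / x ^ 9
      + (12240) * x ^ 0 * h 1 x ^ 2 * h 2 x ^ 2 / x ^ 9
      + (-1200) * x ^ 0 * h 1 x ^ 3 * h 2 x ^ 1 / x ^ 9
      + (-300) * x ^ 0 * h 1 x ^ 4 * h 2 x ^ 0 / x ^ 9
      + (-10512) * x ^ 0 * h 1 x ^ 0 * h 2 x ^ 4 / x ^ 8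
      + (768) * x ^ 0 * h 1 x ^ 1 * h 2 x ^ 3 / x ^ 8
      + (916) * x ^ 0 * h 1 x ^ 2 * h 2 x ^ 2 / x ^ 8
      + (-16) * x ^ 0 * h 1 x ^ 3 * h 2 x ^ 1 / x ^ 8
      + (-592) * x ^ 0 * h 1 x ^ 0 * h 2 x ^ 4 / x ^ 7
      + (16) * x ^ 0 * h 1 x ^ 1 * h 2 x ^ 3 / x ^ 7

noncomputable def Y3 (x : ℝ) : ℝ :=
      (2350080) * x ^ 0 * h 1 x ^ 1 * h 2 x ^ 3 / x ^ 12
      + (-3525120) * x ^ 0 * h 1 x ^ 2 * h 2 x ^ 2 / x ^ 12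
      + (1762560) * x ^ 0 * h 1 x ^ 3 * h 2 x ^ 1 / x ^ 12
      + (-293760) * x ^ 0 * h 1 x ^ 4 * h 2 x ^ 0 / x ^ 12
      + (1645056) * x ^ 0 * h 1 x ^ 0 * h 2 x ^ 4 / x ^ 11
      + (27648) * x ^ 0 * h 1 x ^ 1 * h 2 x ^ 3 / x ^ 11
      + (-1397376) * x ^ 0 * h 1 x ^ 2 * h 2 x ^ 2 / x ^ 11
      + (554112) * x ^ 0 * h 1 x ^ 3 * h 2 x ^ 1 / x ^ 11
      + (-33984) * x ^ 0 * h 1 x ^ 4 * h 2 x ^ 0 / x ^ 11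
      + (978624) * x ^ 0 * h 1 x ^ 0 * h 2 x ^ 4 / x ^ 10
      + (-248256) * x ^ 0 * h 1 x ^ 1 * h 2 x ^ 3 / x ^ 10
      + (-207072) * x ^ 0 * h 1 x ^ 2 * h 2 x ^ 2 / x ^ 10
      + (40272) * x ^ 0 * h 1 x ^ 3 * h 2 x ^ 1 / x ^ 10
      + (1500) * x ^ 0 * h 1 x ^ 4 * h 2 x ^ 0 / x ^ 10
      + (179712) * x ^ 0 * h 1 x ^ 0 * h 2 x ^ 4 / x ^ 9
      + (-28320) * x ^ 0 * h 1 x ^ 1 * h 2 x ^ 3 / x ^ 9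
      + (-12288) * x ^ 0 * h 1 x ^ 2 * h 2 x ^ 2 / x ^ 9
      + (792) * x ^ 0 * h 1 x ^ 3 * h 2 x ^ 1 / x ^ 9
      + (-16) * x ^ 0 * h 1 x ^ 4 * h 2 x ^ 0 / x ^ 9
      + (9648) * x ^ 0 * h 1 x ^ 0 * h 2 x ^ 4 / x ^ 8
      + (-744) * x ^ 0 * h 1 x ^ 1 * h 2 x ^ 3 / x ^ 8
      + (16) * x ^ 0 * h 1 x ^ 0 * h 2 x ^ 4 / x ^ 7

noncomputable def Y4 (x : ℝ) : ℝ :=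
      (-42301440) * x ^ 0 * h 1 x ^ 1 * h 2 x ^ 3 / x ^ 13
      + (63452160) * x ^ 0 * h 1 x ^ 2 * h 2 x ^ 2 / x ^ 13
      + (-31726080) * x ^ 0 * h 1 x ^ 3 * h 2 x ^ 1 / x ^ 13
      + (5287680) * x ^ 0 * h 1 x ^ 4 * h 2 x ^ 0 / x ^ 13
      + (-28905984) * x ^ 0 * h 1 x ^ 0 * h 2 x ^ 4 / x ^ 12
      + (-940032) * x ^ 0 * h 1 x ^ 1 * h 2 x ^ 3 / x ^ 12
      + (26331264) * x ^ 0 * h 1 x ^ 2 * h 2 x ^ 2 / x ^ 12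
      + (-11173248) * x ^ 0 * h 1 x ^ 3 * h 2 x ^ 1 / x ^ 12
      + (927936) * x ^ 0 * h 1 x ^ 4 * h 2 x ^ 0 / x ^ 12
      + (-17587584) * x ^ 0 * h 1 x ^ 0 * h 2 x ^ 4 / x ^ 11
      + (5091840) * x ^ 0 * h 1 x ^ 1 * h 2 x ^ 3 / x ^ 11
      + (3816576) * x ^ 0 * h 1 x ^ 2 * h 2 x ^ 2 / x ^ 11
      + (-1033344) * x ^ 0 * h 1 x ^ 3 * h 2 x ^ 1 / x ^ 11
      + (25272) * x ^ 0 * h 1 x ^ 4 * h 2 x ^ 0 / x ^ 11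
      + (-3303360) * x ^ 0 * h 1 x ^ 0 * h 2 x ^ 4 / x ^ 10
      + (729504) * x ^ 0 * h 1 x ^ 1 * h 2 x ^ 3 / x ^ 10
      + (195600) * x ^ 0 * h 1 x ^ 2 * h 2 x ^ 2 / x ^ 10
      + (-27288) * x ^ 0 * h 1 x ^ 3 * h 2 x ^ 1 / x ^ 10
      + (936) * x ^ 0 * h 1 x ^ 4 * h 2 x ^ 0 / x ^ 10
      + (-182688) * x ^ 0 * h 1 x ^ 0 * h 2 x ^ 4 / x ^ 9
      + (24432) * x ^ 0 * h 1 x ^ 1 * h 2 x ^ 3 / x ^ 9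
      + (144) * x ^ 0 * h 1 x ^ 2 * h 2 x ^ 2 / x ^ 9
      + (-64) * x ^ 0 * h 1 x ^ 3 * h 2 x ^ 1 / x ^ 9
      + (-984) * x ^ 0 * h 1 x ^ 0 * h 2 x ^ 4 / x ^ 8
      + (64) * x ^ 0 * h 1 x ^ 1 * h 2 x ^ 3 / x ^ 8

noncomputable def Y5 (x : ℝ) : ℝ :=
      (803727360) * x ^ 0 * h 1 x ^ 1 * h 2 x ^ 3 / x ^ 14
      + (-1205591040) * x ^ 0 * h 1 x ^ 2 * h 2 x ^ 2 / x ^ 14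
      + (602795520) * x ^ 0 * h 1 x ^ 3 * h 2 x ^ 1 / x ^ 14
      + (-100465920) * x ^ 0 * h 1 x ^ 4 * h 2 x ^ 0 / x ^ 14
      + (535818240) * x ^ 0 * h 1 x ^ 0 * h 2 x ^ 4 / x ^ 13
      + (28200960) * x ^ 0 * h 1 x ^ 1 * h 2 x ^ 3 / x ^ 13
      + (-519298560) * x ^ 0 * h 1 x ^ 2 * h 2 x ^ 2 / x ^ 13
      + (230238720) * x ^ 0 * h 1 x ^ 3 * h 2 x ^ 1 / x ^ 13
      + (-22308480) * x ^ 0 * h 1 x ^ 4 * h 2 x ^ 0 / x ^ 13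
      + (333224064) * x ^ 0 * h 1 x ^ 0 * h 2 x ^ 4 / x ^ 12
      + (-104249088) * x ^ 0 * h 1 x ^ 1 * h 2 x ^ 3 / x ^ 12
      + (-75492864) * x ^ 0 * h 1 x ^ 2 * h 2 x ^ 2 / x ^ 12
      + (24778368) * x ^ 0 * h 1 x ^ 3 * h 2 x ^ 1 / x ^ 12
      + (-1311336) * x ^ 0 * h 1 x ^ 4 * h 2 x ^ 0 / x ^ 12
      + (64552320) * x ^ 0 * h 1 x ^ 0 * h 2 x ^ 4 / x ^ 11
      + (-17252352) * x ^ 0 * h 1 x ^ 1 * h 2 x ^ 3 / x ^ 11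
      + (-3649920) * x ^ 0 * h 1 x ^ 2 * h 2 x ^ 2 / x ^ 11
      + (819744) * x ^ 0 * h 1 x ^ 3 * h 2 x ^ 1 / x ^ 11
      + (-36648) * x ^ 0 * h 1 x ^ 4 * h 2 x ^ 0 / x ^ 11
      + (3835200) * x ^ 0 * h 1 x ^ 0 * h 2 x ^ 4 / x ^ 10
      + (-706032) * x ^ 0 * h 1 x ^ 1 * h 2 x ^ 3 / x ^ 10
      + (-10440) * x ^ 0 * h 1 x ^ 2 * h 2 x ^ 2 / x ^ 10
      + (4736) * x ^ 0 * h 1 x ^ 3 * h 2 x ^ 1 / x ^ 10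
      + (-64) * x ^ 0 * h 1 x ^ 4 * h 2 x ^ 0 / x ^ 10
      + (40176) * x ^ 0 * h 1 x ^ 0 * h 2 x ^ 4 / x ^ 9
      + (-4544) * x ^ 0 * h 1 x ^ 1 * h 2 x ^ 3 / x ^ 9
      + (64) * x ^ 0 * h 1 x ^ 0 * h 2 x ^ 4 / x ^ 8

set_option maxHeartbeats 4000000 in
lemma dY0 {x : ℝ} (hx : x ≠ 0) : HasDerivAt Y0 (Y1 x) x := by
  have H := ((((((((((((((((hmono (-576) 0 1 3 9 hx).add (hmono (864) 0 2 2 9 hx)).add (hmono (-432) 0 3 1 9 hx)).add (hmono (72) 0 4 0 9 hx)).add (hmono (-432) 0 0 4 8 hx)).add (hmono (264) 0 2 2 8 hx)).add (hmono (-48) 0 3 1 8 hx)).add (hmono (-15) 0 4 0 8 hx)).add (hmono (-240) 0 0 4 7 hx)).add (hmono (60) 0 2 2 7 hx)).add (hmono (8) 0 3 1 7 hx)).add (hmono (-4) 0 4 0 7 hx)).add (hmono (-48) 0 0 4 6 hx)).add (hmono (-8) 0 1 3 6 hx)).add (hmono (8) 0 2 2 6 hx)).add (hmono (-4) 0 0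 4 5 hx))
  exact hasDerivAt_congr_deriv H (by unfold Y1; field_simp; ring)

set_option maxHeartbeats 4000000 in
lemma dY1 {x : ℝ} (hx : x ≠ 0) : HasDerivAt Y1 (Y2 x) x := by
  have H := (((((((((((((((((hmono (8640) 0 1 3 10 hx).add (hmono (-12960) 0 2 2 10 hx)).add (hmono (6480) 0 3 1 10 hx)).add (hmono (-1080) 0 4 0 10 hx)).add (hmono (6336) 0 0 4 9 hx)).add (hmono (-4464) 0 2 2 9 hx)).add (hmono (1296) 0 3 1 9 hx)).add (hmono (72) 0 4 0 9 hx)).add (hmono (3600) 0 0 4 8 hx)).add (hmono (-432) 0 1 3 8 hx)).add (hmono (-804) 0 2 2 8 hx)).add (hmono (-12) 0 3 1 8 hx)).add (hmono (36) 0 4 0 8 hx)).add (hmono (672) 0 0 4 7 hx)).add (hmono (24) 0 1 3 7 hx)).add (hmono (-80) 0 2 2 7 hx)).add (hmono (44) 0 0 4 6 hx))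
  exact hasDerivAt_congr_deriv H (by unfold Y2; field_simp; ring)

set_option maxHeartbeats 4000000 in
lemma dY2 {x : ℝ} (hx : x ≠ 0) : HasDerivAt Y2 (Y3 x) x := by
  have H := ((((((((((((((((((((hmono (-138240) 0 1 3 11 hx).add (hmono (207360) 0 2 2 11 hx)).add (hmono (-103680) 0 3 1 11 hx)).add (hmono (17280) 0 4 0 11 hx)).add (hmono (-99072) 0 0 4 10 hx)).add (hmono (-576) 0 1 3 10 hx)).add (hmono (77472) 0 2 2 10 hx)).add (hmono (-27504) 0 3 1 10 hx)).add (hmono (648) 0 4 0 10 hx)).add (hmono (-57600) 0 0 4 9 hx)).add (hmono (11520) 0 1 3 9 hx)).add (hmono (12240) 0 2 2 9 hx)).add (hmono (-1200) 0 3 1 9 hx)).add (hmono (-300) 0 4 0 9 hx)).add (hmono (-10512) 0 0 4 8 hx)).add (hmono (768) 0 1 3 8 hx)).add (hmono (916) 0 2 2 8 hx)).add (hmono (-16) 0 3 1 8 hx)).add (hmono (-592) 0 0 4 7 hx)).add (hmono (16) 0 1 3 7 hx))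
  exact hasDerivAt_congr_deriv H (by unfold Y3; field_simp; ring)

set_option maxHeartbeats 4000000 in
lemma dY3 {x : ℝ} (hx : x ≠ 0) : HasDerivAt Y3 (Y4 x) x := by
  have H := ((((((((((((((((((((((hmono (2350080) 0 1 3 12 hx).add (hmono (-3525120) 0 2 2 12 hx)).add (hmono (1762560) 0 3 1 12 hx)).add (hmono (-293760) 0 4 0 12 hx)).add (hmono (1645056) 0 0 4 11 hx)).add (hmono (27648) 0 1 3 11 hx)).add (hmono (-1397376) 0 2 2 11 hx)).add (hmono (554112) 0 3 1 11 hx)).add (hmono (-33984) 0 4 0 11 hx)).add (hmono (978624) 0 0 4 10 hx)).add (hmono (-248256) 0 1 3 10 hx)).add (hmono (-207072) 0 2 2 10 hx)).add (hmono (40272) 0 3 1 10 hx)).add (hmono (1500) 0 4 0 10 hx)).add (hmono (179712) 0 0 4 9 hx)).add (hmono (-28320) 0 1 3 9 hx)).add (hmono (-12288) 0 2 2 9 hx)).add (hmono (792) 0 3 1 9 hx)).add (hmono (-16) 0 4 0 9 hx)).add (hmono (9648) 0 0 4 8 hx)).add (hmono (-744) 0 1 3 8 hx)).add (hmono (16)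 0 0 4 7 hx))
  exact hasDerivAt_congr_deriv H (by unfold Y4; field_simp; ring)

set_option maxHeartbeats 4000000 in
lemma dY4 {x : ℝ} (hx : x ≠ 0) : HasDerivAt Y4 (Y5 x) x := by
  have H := (((((((((((((((((((((((((hmono (-42301440) 0 1 3 13 hx).add (hmono (63452160) 0 2 2 13 hx)).add (hmono (-31726080) 0 3 1 13 hx)).add (hmono (5287680) 0 4 0 13 hx)).add (hmono (-28905984) 0 0 4 12 hx)).add (hmono (-940032) 0 1 3 12 hx)).add (hmono (26331264) 0 2 2 12 hx)).add (hmono (-11173248) 0 3 1 12 hx)).add (hmono (927936) 0 4 0 12 hx)).add (hmono (-17587584) 0 0 4 11 hx)).add (hmono (5091840) 0 1 3 11 hx)).add (hmono (3816576) 0 2 2 11 hx)).add (hmono (-1033344) 0 3 1 11 hx)).add (hmono (25272) 0 4 0 11 hx)).add (hmono (-3303360) 0 0 4 10 hx)).add (hmono (729504) 0 1 3 10 hx)).add (hmono (195600) 0 2 2 10 hx)).add (hmono (-27288) 0 3 1 10 hx)).add (hmono (936) 0 4 0 10 hx)).add (hmono (-182688) 0 0 4 9 hx)).add (hmono (24432)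 0 1 3 9 hx)).add (hmono (144) 0 2 2 9 hx)).add (hmono (-64) 0 3 1 9 hx)).add (hmono (-984) 0 0 4 8 hx)).add (hmono (64) 0 1 3 8 hx))
  exact hasDerivAt_congr_deriv H (by unfold Y5; field_simp; ring)


lemma h4_eq {x : ℝ} (hx : x ≠ 0) : h 4 x = (h 2 x - 3 * h 3 x) / x := by
  have := hrec 2 x; norm_num at this; field_simp; linarith

lemma h5_eq {x : ℝ} (hx : x ≠ 0) : h 5 x = (h 3 x - 4 * h 4 x) / x := by
  have := hrec 3 x; norm_num at this; field_simp; linarith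

lemma h6_eq {x : ℝ} (hx : x ≠ 0) : h 6 x = (h 4 x - 5 * h 5 x) / x := by
  have := hrec 4 x; norm_num at this; field_simp; linarith

lemma h7_eq {x : ℝ} (hx : x ≠ 0) : h 7 x = (h 5 x - 6 * h 6 x) / x := by
  have := hrec 5 x; norm_num at this; field_simp; linarith

set_option maxHeartbeats 2000000 in
lemma det_h {x : ℝ} (hx : x ≠ 0) :
    Matrix.det (fun j k : Fin 4 => h ((j : ℕ) + (k : ℕ) + 1) x) = Y0 x := by
  change Matrix.det (Matrix.of fun j k : Fin 4 => h ((j : ℕ) + (k : ℕ) + 1) x) = Y0 x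
  simp [Matrix.det_succ_row_zero, Fin.sum_univ_succ,
    show Fin.succAbove (1 : Fin 4) (2 : Fin 3) = 3 from rfl,
    show Fin.succAbove (2 : Fin 4) (2 : Fin 3) = 3 from rfl,
    show Fin.succAbove (3 : Fin 4) (0 : Fin 3) = 0 from rfl,
    show Fin.succAbove (3 : Fin 4) (1 : Fin 3) = 1 from rfl,
    show Fin.succAbove (3 : Fin 4) (2 : Fin 3) = 2 from rfl,
    show Fin.succAbove (2 : Fin 4) (0 : Fin 3) = 0 from rfl,
    show Fin.succAbove (2 : Fin 4) (1 : Fin 3) = 1 from rfl,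
    show Fin.succAbove (1 : Fin 4) (0 : Fin 3) = 0 from rfl,
    show Fin.succAbove (1 : Fin 4) (1 : Fin 3) = 2 from rfl,
    show ((3 : Fin 4) : ℕ) = 3 from rfl]
  rw [h7_eq hx, h6_eq hx, h5_eq hx, h4_eq hx, h3_eq hx]
  unfold Y0
  field_simp
  ring

lemma besselI_eq {x : ℝ} (hx : 0 < x) (ν : ℕ) :
    besselI (ν : ℝ) (2 * Real.sqrt x) = Real.sqrt x ^ ν * h ν x := by
  have hs : 0 < Real.sqrt x := Real.sqrt_pos.2 hx
  unfold besselI h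
  rw [← tsum_mul_left]
  apply tsum_congr
  intro m
  have e0 : 2 * Real.sqrt x / 2 = Real.sqrt x := by ring
  rw [e0]
  have e1 : ((ν : ℝ) + 2 * (m : ℝ)) = ((ν + 2 * m : ℕ) : ℝ) := by push_cast; ring
  rw [e1, Real.rpow_natCast]
  have e2 : Real.sqrt x ^ (ν + 2 * m) = Real.sqrt x ^ ν * x ^ m := by
    rw [pow_add, pow_mul, Real.sq_sqrt hx.le]
  have e3 : Real.Gamma ((ν : ℝ) + (m : ℝ) + 1) = ((ν + m).factorial : ℝ) := by
    rw [show ((ν : ℝ) + (m : ℝ) + 1) = ((ν + m : ℕ) : ℝ) + 1 by push_cast; ring,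
      Real.Gamma_nat_eq_factorial]
  rw [e2, e3]
  ring

lemma hankel_eq {x : ℝ} (hx : 0 < x) : hankelY 4 x = Y0 x := by
  have hs : 0 < Real.sqrt x := Real.sqrt_pos.2 hx
  unfold hankelY
  have A : (fun j k : Fin 4 => besselI (((j : ℕ) : ℝ) + ((k : ℕ) : ℝ) + 1) (2 * Real.sqrt x))
      = Matrix.of (fun j k : Fin 4 => (Real.sqrt x * Real.sqrt x ^ (j : ℕ)) *
          (Matrix.of (fun j' k' : Fin 4 =>
            Real.sqrt x ^ (k' : ℕ) * h ((j' : ℕ) + (k' : ℕ) + 1) x) j k)) := by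
    funext j k
    simp only [Matrix.of_apply]
    have e := besselI_eq hx ((j : ℕ) + (k : ℕ) + 1)
    rw [show (((j : ℕ) + (k : ℕ) + 1 : ℕ) : ℝ) = ((j : ℕ) : ℝ) + ((k : ℕ) : ℝ) + 1 by
      push_cast; ring] at e
    rw [e, pow_add, pow_add, pow_one]
    ring
  rw [A, Matrix.det_mul_column]
  rw [show (Matrix.of fun j' k' : Fin 4 => Real.sqrt x ^ (k' : ℕ) * h ((j' : ℕ) + (k' : ℕ) + 1) x) = Matrix.of (fun i j => (fun k' : Fin 4 => Real.sqrt x ^ (k' : ℕ)) j * (Matrix.of fun j' k' : Fin 4 => h ((j' : ℕ) + (k' : ℕ) + 1) x) i j) from rfl, Matrix.det_mul_row]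
  have p1 : (∏ i : Fin 4, (Real.sqrt x * Real.sqrt x ^ (i : ℕ))) = Real.sqrt x ^ 10 := by
    simp only [Fin.prod_univ_four, show ((0 : Fin 4) : ℕ) = 0 from rfl,
      show ((1 : Fin 4) : ℕ) = 1 from rfl, show ((2 : Fin 4) : ℕ) = 2 from rfl,
      show ((3 : Fin 4) : ℕ) = 3 from rfl]
    ring
  have p2 : (∏ i : Fin 4, Real.sqrt x ^ (i : ℕ)) = Real.sqrt x ^ 6 := by
    simp only [Fin.prod_univ_four, show ((0 : Fin 4) : ℕ) = 0 from rfl,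
      show ((1 : Fin 4) : ℕ) = 1 from rfl, show ((2 : Fin 4) : ℕ) = 2 from rfl,
      show ((3 : Fin 4) : ℕ) = 3 from rfl]
    ring
  rw [p1, p2, show Matrix.det (Matrix.of fun j' k' : Fin 4 => h ((j' : ℕ) + (k' : ℕ) + 1) x) = Y0 x from det_h (ne_of_gt hx)]
  have hpow : Real.sqrt x ^ 10 * (Real.sqrt x ^ 6 * Y0 x) = x ^ 8 * Y0 x := by
    rw [show Real.sqrt x ^ 10 * (Real.sqrt x ^ 6 * Y0 x) = (Real.sqrt x ^ 2) ^ 8 * Y0 x by ring,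
      Real.sq_sqrt hx.le]
  rw [hpow]
  have h8 : (x : ℝ) ^ 8 ≠ 0 := pow_ne_zero _ (ne_of_gt hx)
  have hr : x ^ (-((4 : ℕ) : ℝ) ^ 2 / 2) = (x ^ 8)⁻¹ := by
    rw [show (-((4 : ℕ) : ℝ) ^ 2 / 2) = ((-8 : ℤ) : ℝ) by push_cast; norm_num,
      Real.rpow_intCast, zpow_neg, show ((8 : ℤ)) = ((8 : ℕ) : ℤ) from rfl, zpow_natCast]
  rw [hr, show (4 * (4 - 1) / 2) = 6 from rfl]
  norm_num
  rw [inv_mul_cancel_left₀ h8]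

set_option maxHeartbeats 4000000 in
/-- The case `l = 4`: the fifth order linear ODE satisfied by
`y(x) = (−1)^{4·3/2} x^{−8} det[I_{j+k+1}(2√x)]_{j,k=0,…,3}`. -/
theorem hankelY_four_fifth_order_ODE :
    ∀ x : ℝ, 0 < x →
      x ^ 4 * iteratedDeriv 5 (hankelY 4) x
        + 60 * x ^ 3 * iteratedDeriv 4 (hankelY 4) x
        + (1238 - 20 * x) * x ^ 2 * iteratedDeriv 3 (hankelY 4) x
        + (10268 - 662 * x) * x * iteratedDeriv 2 (hankelY 4) x
        + (28288 - 6108 * x + 64 * x ^ 2) * deriv (hankelY 4) x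
        + (-14144 + 640 * x) * hankelY 4 x = 0 := by
  intro x hx
  have Ev : ∀ (f g : ℝ → ℝ), (∀ y : ℝ, 0 < y → f y = g y) →
      ∀ y : ℝ, 0 < y → f =ᶠ[nhds y] g := by
    intro f g hfg y hy
    exact Filter.eventuallyEq_of_mem (isOpen_Ioi.mem_nhds hy) fun z hz => hfg z hz
  have E0 : ∀ y : ℝ, 0 < y → hankelY 4 y = Y0 y := fun y hy => hankel_eq hy
  have E1 : ∀ y : ℝ, 0 < y → deriv (hankelY 4) y = Y1 y := by
    intro y hy
    rw [(Ev _ _ E0 y hy).deriv_eq, (dY0 (ne_of_gt hy)).deriv]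
  have E2 : ∀ y : ℝ, 0 < y → iteratedDeriv 2 (hankelY 4) y = Y2 y := by
    intro y hy
    rw [show iteratedDeriv 2 (hankelY 4) = deriv (iteratedDeriv 1 (hankelY 4)) from
      iteratedDeriv_succ, iteratedDeriv_one]
    rw [(Ev _ _ E1 y hy).deriv_eq, (dY1 (ne_of_gt hy)).deriv]
  have E3 : ∀ y : ℝ, 0 < y → iteratedDeriv 3 (hankelY 4) y = Y3 y := by
    intro y hy
    rw [show iteratedDeriv 3 (hankelY 4) = deriv (iteratedDeriv 2 (hankelY 4)) from
      iteratedDeriv_succ]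
    rw [(Ev _ _ E2 y hy).deriv_eq, (dY2 (ne_of_gt hy)).deriv]
  have E4 : ∀ y : ℝ, 0 < y → iteratedDeriv 4 (hankelY 4) y = Y4 y := by
    intro y hy
    rw [show iteratedDeriv 4 (hankelY 4) = deriv (iteratedDeriv 3 (hankelY 4)) from
      iteratedDeriv_succ]
    rw [(Ev _ _ E3 y hy).deriv_eq, (dY3 (ne_of_gt hy)).deriv]
  have E5 : ∀ y : ℝ, 0 < y → iteratedDeriv 5 (hankelY 4) y = Y5 y := by
    intro y hy
    rw [show iteratedDeriv 5 (hankelY 4) = deriv (iteratedDeriv 4 (hankelY 4)) from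
      iteratedDeriv_succ]
    rw [(Ev _ _ E4 y hy).deriv_eq, (dY4 (ne_of_gt hy)).deriv]
  rw [E5 x hx, E4 x hx, E3 x hx, E2 x hx, E1 x hx, E0 x hx]
  have hx' : x ≠ 0 := ne_of_gt hx
  unfold Y0 Y1 Y2 Y3 Y4 Y5
  field_simp
  ring
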